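/- Let z₁ be a smooth nowhere-vanishing solution of L(z) = zₓₓ + b·z_y + c·z = 0, and define r = −(z₁)ₓ/z₁, so that M(u) = uₓ + r·u = (uₓ·z₁ − u·(z₁)ₓ)/z₁ satisfies M(z₁) = 0. Then r satisfies the compatibility condition 0 = −c·bₓ/b + cₓ − r²·bₓ/b + 2 r rₓ + rₓ·bₓ/b − b r_y − rₓₓ, and hence M defines a differential transformation of L. -/

import Mathlib

noncomputable section
open Real

/-- Smooth functions on the plane, as plain functions `ℝ × ℝ → ℝ`. -/
abbrev F := (ℝ × ℝ) → ℝ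

/-- Partial derivative in `x`. -/
noncomputable def Dx (f : F) : F := fun p => fderiv ℝ f p (1, 0)

/-- Partial derivative in `y`. -/
noncomputable def Dy (f : F) : F := fun p => fderiv ℝ f p (0, 1)

/-- The parabolic operator `L = Dx² + a·Dx + b·Dy + c`. -/
noncomputable def Lop (a b c : F) (u : F) : F :=
  fun p => Dx (Dx u) p + a p * Dx u p + b p * Dy u p + c p * u p

lemma contDiff_Dx {f : F} (hf : ContDiff ℝ (⊤ : ℕ∞) f) : ContDiff ℝ (⊤ : ℕ∞) (Dx f) :=
  (hf.fderiv_right (m := (⊤ : ℕ∞)) le_rfl).clm_apply contDiff_const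

lemma contDiff_Dy {f : F} (hf : ContDiff ℝ (⊤ : ℕ∞) f) : ContDiff ℝ (⊤ : ℕ∞) (Dy f) :=
  (hf.fderiv_right (m := (⊤ : ℕ∞)) le_rfl).clm_apply contDiff_const

lemma Dx_add {f g : F} {p : ℝ × ℝ} (hf : DifferentiableAt ℝ f p) (hg : DifferentiableAt ℝ g p) :
    Dx (fun q => f q + g q) p = Dx f p + Dx g p := by
  simp [Dx, fderiv_fun_add hf hg]

lemma Dx_neg {f : F} {p : ℝ × ℝ} : Dx (fun q => -f q) p = -Dx f p := by
  simp [Dx]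

lemma Dy_neg {f : F} {p : ℝ × ℝ} : Dy (fun q => -f q) p = -Dy f p := by
  simp [Dy]

lemma Dx_mul {f g : F} {p : ℝ × ℝ} (hf : DifferentiableAt ℝ f p) (hg : DifferentiableAt ℝ g p) :
    Dx (fun q => f q * g q) p = Dx f p * g p + f p * Dx g p := by
  simp [Dx, fderiv_fun_mul hf hg]; ring

lemma D_inv {g : F} {p : ℝ × ℝ} (hg : DifferentiableAt ℝ g p) (hg0 : g p ≠ 0) (v : ℝ × ℝ) :
    fderiv ℝ (fun q => (g q)⁻¹) p v = -fderiv ℝ g p v / g p ^ 2 := by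
  have h : (fun q => (g q)⁻¹) = (fun x : ℝ => x⁻¹) ∘ g := rfl
  rw [h, fderiv_comp p (differentiableAt_inv hg0) hg]
  rw [fderiv_inv]
  simp
  ring

lemma Dx_div {f g : F} {p : ℝ × ℝ} (hf : DifferentiableAt ℝ f p) (hg : DifferentiableAt ℝ g p)
    (hg0 : g p ≠ 0) :
    Dx (fun q => f q / g q) p = (Dx f p * g p - f p * Dx g p) / (g p) ^ 2 := by
  have h : (fun q => f q / g q) = fun q => f q * (g q)⁻¹ := by
    funext q; rw [div_eq_mul_inv]
  rw [h, Dx_mul (g := fun q => (g q)⁻¹) hf (hg.inv hg0)]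
  have := D_inv hg hg0 (1,0)
  rw [Dx, Dx, Dx]
  rw [show fderiv ℝ (fun q => (g q)⁻¹) p (1,0) = -fderiv ℝ g p (1,0) / g p ^ 2 from this]
  field_simp
  ring

lemma Dy_div {f g : F} {p : ℝ × ℝ} (hf : DifferentiableAt ℝ f p) (hg : DifferentiableAt ℝ g p)
    (hg0 : g p ≠ 0) :
    Dy (fun q => f q / g q) p = (Dy f p * g p - f p * Dy g p) / (g p) ^ 2 := by
  have h : (fun q => f q / g q) = fun q => f q * (g q)⁻¹ := by
    funext q; rw [div_eq_mul_inv]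
  have hmul : Dy (fun q => f q * (g q)⁻¹) p = Dy f p * (g p)⁻¹ + f p * Dy (fun q => (g q)⁻¹) p := by
    simp only [Dy]; rw [fderiv_fun_mul (d := fun q => (g q)⁻¹) hf (hg.inv hg0)]; simp; ring
  rw [h, hmul]
  have := D_inv hg hg0 (0,1)
  rw [Dy, Dy, Dy]
  rw [show fderiv ℝ (fun q => (g q)⁻¹) p (0,1) = -fderiv ℝ g p (0,1) / g p ^ 2 from this]
  field_simp
  ring

lemma clairaut {f : F} (hf : ContDiff ℝ (⊤ : ℕ∞) f) (p : ℝ × ℝ) :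
    Dy (Dx f) p = Dx (Dy f) p := by
  have hdf : Differentiable ℝ f := hf.differentiable (by simp)
  have hdf' : Differentiable ℝ (fderiv ℝ f) :=
    (hf.fderiv_right (m := (⊤ : ℕ∞)) le_rfl).differentiable (by simp)
  have hsymm := second_derivative_symmetric (f' := fderiv ℝ f)
    (fun y => (hdf y).hasFDerivAt) ((hdf' p).hasFDerivAt) ((1:ℝ), (0:ℝ)) ((0:ℝ),(1:ℝ))
  have h1 : Dy (Dx f) p = fderiv ℝ (fderiv ℝ f) p (0,1) (1,0) := by
    have : Dx f = fun q => (fderiv ℝ f q) (1,0) := rfl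
    rw [Dy, this, fderiv_clm_apply (hdf' p) (differentiableAt_const _)]
    simp
  have h2 : Dx (Dy f) p = fderiv ℝ (fderiv ℝ f) p (1,0) (0,1) := by
    have : Dy f = fun q => (fderiv ℝ f q) (0,1) := rfl
    rw [Dx, this, fderiv_clm_apply (hdf' p) (differentiableAt_const _)]
    simp
  rw [h1, h2, hsymm]

theorem X_transformation_from_solution
    (b c z₁ : F) (hb : ContDiff ℝ (⊤ : ℕ∞) b) (hc : ContDiff ℝ (⊤ : ℕ∞) c)
    (hz : ContDiff ℝ (⊤ : ℕ∞) z₁) (hb0 : ∀ p, b p ≠ 0) (hz0 : ∀ p, z₁ p ≠ 0)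
    (hsol : ∀ p, Lop 0 b c z₁ p = 0)
    (r : F) (hrdef : r = fun p => -(Dx z₁ p) / z₁ p) :
    ∀ p, 0 = -c p * Dx b p / b p + Dx c p - (r p) ^ 2 * Dx b p / b p
        + 2 * r p * Dx r p + Dx r p * Dx b p / b p
        - b p * Dy r p - Dx (Dx r) p := by
  -- smoothness / differentiability facts
  have hw : ContDiff ℝ (⊤ : ℕ∞) (Dx z₁) := contDiff_Dx hz
  have hv : ContDiff ℝ (⊤ : ℕ∞) (Dy z₁) := contDiff_Dy hz
  have dz : ∀ q, DifferentiableAt ℝ z₁ q := fun q => (hz.differentiable (by simp)).differentiableAt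
  have dw : ∀ q, DifferentiableAt ℝ (Dx z₁) q := fun q => (hw.differentiable (by simp)).differentiableAt
  have dv : ∀ q, DifferentiableAt ℝ (Dy z₁) q := fun q => (hv.differentiable (by simp)).differentiableAt
  have db : ∀ q, DifferentiableAt ℝ b q := fun q => (hb.differentiable (by simp)).differentiableAt
  have dc : ∀ q, DifferentiableAt ℝ c q := fun q => (hc.differentiable (by simp)).differentiableAt
  -- the PDE rewritten
  have hsol' : ∀ q, Dx (Dx z₁) q = -(b q * Dy z₁ q) - c q * z₁ q := by
    intro q
    have := hsol q
    simp only [Lop, Pi.zero_apply, zero_mul, add_zero, zero_add] at this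
    linarith
  -- r is smooth
  have hrsm : ContDiff ℝ (⊤ : ℕ∞) r := by
    rw [hrdef]; exact (hw.neg.div hz hz0)
  have dr : ∀ q, DifferentiableAt ℝ r q := fun q => (hrsm.differentiable (by simp)).differentiableAt
  -- auxiliary function s = (Dy z₁)/z₁
  set s : F := fun q => Dy z₁ q / z₁ q with hs
  have hssm : ContDiff ℝ (⊤ : ℕ∞) s := hv.div hz hz0
  have ds : ∀ q, DifferentiableAt ℝ s q := fun q => (hssm.differentiable (by simp)).differentiableAt
  -- first x-derivative of r, as a function
  have hrx : Dx r = fun q => r q ^ 2 + b q * s q + c q := by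
    funext q
    have h1 : Dx r q = (Dx (fun q' => -(Dx z₁ q')) q * z₁ q - (-(Dx z₁ q)) * Dx z₁ q) / z₁ q ^ 2 := by
      rw [hrdef]
      exact Dx_div ((dw q).neg) (dz q) (hz0 q)
    rw [h1, Dx_neg, hsol' q, hrdef]
    simp only [hs]
    field_simp [hz0 q]
    ring
  -- second x-derivative of r at p
  intro p
  have hDxr : Dx r p = r p ^ 2 + b p * s p + c p := by
    rw [hrx]
  have hrxx : Dx (Dx r) p = 2 * r p * (r p ^ 2 + b p * s p + c p)
      + (Dx b p * s p + b p * Dx s p) + Dx c p := by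
    rw [hrx]
    have h1 : Dx (fun q => r q ^ 2 + b q * s q + c q) p
        = Dx (fun q => r q ^ 2 + b q * s q) p + Dx c p :=
      Dx_add (((dr p).pow 2).add ((db p).mul (ds p))) (dc p)
    have h2 : Dx (fun q => r q ^ 2 + b q * s q) p
        = Dx (fun q => r q ^ 2) p + Dx (fun q => b q * s q) p :=
      Dx_add ((dr p).pow 2) ((db p).mul (ds p))
    have h3 : Dx (fun q => r q ^ 2) p = Dx r p * r p + r p * Dx r p := by
      have : (fun q => r q ^ 2) = fun q => r q * r q := by funext q; ring
      rw [this]; exact Dx_mul (dr p) (dr p)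
    have h4 : Dx (fun q => b q * s q) p = Dx b p * s p + b p * Dx s p :=
      Dx_mul (db p) (ds p)
    rw [h1, h2, h3, h4, hDxr]; ring
  -- x-derivative of s at p
  have hsx : Dx s p = (Dx (Dy z₁) p * z₁ p - Dy z₁ p * Dx z₁ p) / z₁ p ^ 2 := by
    simp only [hs]
    exact Dx_div (dv p) (dz p) (hz0 p)
  -- y-derivative of r at p
  have hry : Dy r p = (-(Dy (Dx z₁) p) * z₁ p - (-(Dx z₁ p)) * Dy z₁ p) / z₁ p ^ 2 := by
    rw [hrdef]
    have := Dy_div (f := fun q' => -(Dx z₁ q')) ((dw p).neg) (dz p) (hz0 p)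
    rw [this, Dy_neg]
  -- Clairaut
  have hcl : Dy (Dx z₁) p = Dx (Dy z₁) p := clairaut hz p
  -- value of r and Dx r at p
  have hrp : r p = -(Dx z₁ p) / z₁ p := by rw [hrdef]
  have hrxp : Dx r p = r p ^ 2 + b p * s p + c p := by rw [hrx]
  have hsp : s p = Dy z₁ p / z₁ p := rfl
  rw [hrxp, hrxx, hry, hcl, hsx, hrp, hsp]
  have hZ := hz0 p
  have hB := hb0 p
  generalize z₁ p = Z at *
  generalize b p = B at *
  generalize Dx z₁ p = W at *
  generalize Dy z₁ p = V at *
  generalize Dx (Dy z₁) p = M at *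
  generalize c p = C at *
  generalize Dx b p = Bx at *
  generalize Dx c p = Cx at *
  field_simp
  ring
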